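/- Let C be a contraction on a Banach space X. Then for all n ∈ ℕ and x ∈ X, ‖(Cⁿ - e^{n(C-I)}) x‖ ≤ (n/2)( ‖(C - I)² x‖ + (e²/3)‖(C - I)³ x‖ ). -/

import Mathlib

open NormedSpace


section aux
variable {X : Type*} [NormedAddCommGroup X] [NormedSpace ℝ X] [CompleteSpace X]

lemma aux_norm_one_le : ‖(1 : X →L[ℝ] X)‖ ≤ 1 := by
  rw [ContinuousLinearMap.one_def]; exact ContinuousLinearMap.norm_id_le

lemma aux_norm_pow_le (T : X →L[ℝ] X) (n : ℕ) : ‖T ^ n‖ ≤ ‖T‖ ^ n := by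
  cases n with
  | zero => simpa using aux_norm_one_le
  | succ n => exact norm_pow_le' T n.succ_pos

lemma aux_norm_exp_le (T : X →L[ℝ] X) : ‖exp T‖ ≤ Real.exp ‖T‖ := by
  rw [exp_eq_tsum ℝ]
  refine (norm_tsum_le_tsum_norm (norm_expSeries_summable' T)).trans ?_
  rw [Real.exp_eq_exp_ℝ, exp_eq_tsum ℝ]
  refine Summable.tsum_le_tsum (fun n => ?_) (norm_expSeries_summable' T) (expSeries_summable' (𝕂 := ℝ) ‖T‖)
  rw [norm_smul, norm_inv, Real.norm_natCast, smul_eq_mul]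
  gcongr
  exact aux_norm_pow_le T n

lemma aux_norm_E (C : X →L[ℝ] X) (hC : ‖C‖ ≤ 1) : ‖exp (C - 1)‖ ≤ 1 := by
  have hcomm : Commute C (-1 : X →L[ℝ] X) := (Commute.one_right C).neg_right
  let +nondep : NormedAlgebra ℚ (X →L[ℝ] X) := .restrictScalars ℚ ℝ (X →L[ℝ] X)
  rw [sub_eq_add_neg, exp_add_of_commute hcomm]
  have h2 : exp (-1 : X →L[ℝ] X) = algebraMap ℝ (X →L[ℝ] X) (Real.exp (-1)) := by
    rw [Real.exp_eq_exp_ℝ, algebraMap_exp_comm]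
    norm_num
  calc ‖exp C * exp (-1 : X →L[ℝ] X)‖ ≤ ‖exp C‖ * ‖exp (-1 : X →L[ℝ] X)‖ := norm_mul_le _ _
    _ ≤ Real.exp ‖C‖ * Real.exp (-1) := by
        refine mul_le_mul (aux_norm_exp_le C) ?_ (norm_nonneg _) (Real.exp_nonneg _)
        rw [h2, norm_algebraMap]
        calc ‖Real.exp (-1)‖ * ‖(1 : X →L[ℝ] X)‖ ≤ Real.exp (-1) * 1 := by
              rw [Real.norm_eq_abs, abs_of_nonneg (Real.exp_nonneg _)]
              gcongr
              exact aux_norm_one_le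
          _ = Real.exp (-1) := mul_one _
    _ ≤ Real.exp 1 * Real.exp (-1) := by gcongr
    _ = 1 := by rw [← Real.exp_add]; norm_num
end aux

section main
variable {X : Type*} [NormedAddCommGroup X] [NormedSpace ℝ X] [CompleteSpace X]

lemma aux_pointwise (C : X →L[ℝ] X) (hC : ‖C‖ ≤ 1) (x : X) :
    ‖(C - exp (C - 1)) x‖
      ≤ 1 / 2 * ‖((C - 1) ^ 2 : X →L[ℝ] X) x‖
        + Real.exp 2 / 6 * ‖((C - 1) ^ 3 : X →L[ℝ] X) x‖ := by
  set A : X →L[ℝ] X := C - 1 with hA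
  have hA2 : ‖A‖ ≤ 2 := by
    calc ‖C - 1‖ ≤ ‖C‖ + ‖(1 : X →L[ℝ] X)‖ := norm_sub_le _ _
      _ ≤ 1 + 1 := add_le_add hC aux_norm_one_le
      _ = 2 := by norm_num
  set g : ℕ → X := fun k => (k.factorial⁻¹ : ℝ) • (A ^ k) x with hg
  have hsum : Summable (fun n : ℕ => (n.factorial⁻¹ : ℝ) • A ^ n) := expSeries_summable' A
  have hgsum : Summable g := by
    simpa [hg] using hsum.mapL (ContinuousLinearMap.apply ℝ X x)
  have happ : (exp A) x = ∑' n : ℕ, g n := by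
    rw [exp_eq_tsum ℝ]
    simpa [hg] using (ContinuousLinearMap.apply ℝ X x).map_tsum hsum
  have hsplit : (∑' n : ℕ, g n) = (x + A x) + ∑' k : ℕ, g (k + 2) := by
    rw [← Summable.sum_add_tsum_nat_add 2 hgsum]
    congr 1
    simp [hg, Finset.sum_range_succ, Nat.factorial]
  have hCx : C x = x + A x := by
    have : C = 1 + A := by rw [hA]; abel
    rw [this]; simp [add_comm]
  have key : (C - exp A) x = -(∑' k : ℕ, g (k + 2)) := by
    rw [ContinuousLinearMap.sub_apply, happ, hsplit, hCx]
    abel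
  have hgsum2 : Summable (fun k => g (k + 2)) := (summable_nat_add_iff 2).2 hgsum
  have hsplit2 : (∑' k : ℕ, g (k + 2)) = g 2 + ∑' k : ℕ, g (k + 3) := by
    rw [← Summable.sum_add_tsum_nat_add 1 hgsum2]
    simp [Finset.sum_range_one]
  have hg2 : g 2 = (2⁻¹ : ℝ) • (A ^ 2) x := by simp [hg, Nat.factorial]
  -- norm bound for the tail terms
  have hterm : ∀ k : ℕ, ‖g (k + 3)‖ ≤ 2 ^ k / k.factorial * (‖(A ^ 3) x‖ / 6) := by
    intro k
    have hpow : (A ^ (k + 3)) x = (A ^ k) ((A ^ 3) x) := by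
      rw [pow_add]; rfl
    have h1 : ‖g (k + 3)‖ = ((k + 3).factorial : ℝ)⁻¹ * ‖(A ^ k) ((A ^ 3) x)‖ := by
      rw [hg]; simp only [norm_smul, norm_inv, Real.norm_natCast, hpow]
    rw [h1]
    have h2 : ‖(A ^ k) ((A ^ 3) x)‖ ≤ 2 ^ k * ‖(A ^ 3) x‖ := by
      calc ‖(A ^ k) ((A ^ 3) x)‖ ≤ ‖A ^ k‖ * ‖(A ^ 3) x‖ := ContinuousLinearMap.le_opNorm _ _
        _ ≤ ‖A‖ ^ k * ‖(A ^ 3) x‖ := by gcongr; exact aux_norm_pow_le A k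
        _ ≤ 2 ^ k * ‖(A ^ 3) x‖ := by gcongr
    have hfac : (6 : ℝ) * k.factorial ≤ ((k + 3).factorial : ℝ) := by
      have h3 : (k + 3).factorial = (k + 3) * ((k + 2) * ((k + 1) * k.factorial)) := by
        simp [Nat.factorial_succ]
      have h6 : 6 ≤ (k + 3) * ((k + 2) * (k + 1)) := by
        have := Nat.mul_le_mul (show 3 ≤ k + 3 by omega)
          (Nat.mul_le_mul (show 2 ≤ k + 2 by omega) (show 1 ≤ k + 1 by omega))
        simpa using this
      have : 6 * k.factorial ≤ (k + 3).factorial := by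
        rw [h3]
        calc 6 * k.factorial ≤ (k + 3) * ((k + 2) * (k + 1)) * k.factorial :=
              Nat.mul_le_mul_right _ h6
          _ = (k + 3) * ((k + 2) * ((k + 1) * k.factorial)) := by ring
      exact_mod_cast this
    have hfpos : (0 : ℝ) < ((k + 3).factorial : ℝ) := by positivity
    have hkf : (0 : ℝ) < (k.factorial : ℝ) := by positivity
    calc ((k + 3).factorial : ℝ)⁻¹ * ‖(A ^ k) ((A ^ 3) x)‖
        ≤ ((k + 3).factorial : ℝ)⁻¹ * (2 ^ k * ‖(A ^ 3) x‖) := by gcongr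
      _ ≤ (6 * (k.factorial : ℝ))⁻¹ * (2 ^ k * ‖(A ^ 3) x‖) :=
          mul_le_mul_of_nonneg_right (inv_anti₀ (by positivity) hfac) (by positivity)
      _ = 2 ^ k / k.factorial * (‖(A ^ 3) x‖ / 6) := by
          rw [mul_inv]
          ring
  have hmaj : Summable (fun k : ℕ => 2 ^ k / (k.factorial : ℝ) * (‖(A ^ 3) x‖ / 6)) :=
    (Real.summable_pow_div_factorial 2).mul_right _
  have htailnorm : Summable (fun k : ℕ => ‖g (k + 3)‖) :=
    Summable.of_nonneg_of_le (fun k => norm_nonneg _) hterm hmaj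
  have hexp2 : (∑' k : ℕ, 2 ^ k / (k.factorial : ℝ)) = Real.exp 2 := by
    rw [Real.exp_eq_exp_ℝ, exp_eq_tsum ℝ]
    congr 1
    ext k
    rw [smul_eq_mul]
    ring
  have htail : ‖∑' k : ℕ, g (k + 3)‖ ≤ Real.exp 2 / 6 * ‖(A ^ 3) x‖ := by
    calc ‖∑' k : ℕ, g (k + 3)‖ ≤ ∑' k : ℕ, ‖g (k + 3)‖ := norm_tsum_le_tsum_norm htailnorm
      _ ≤ ∑' k : ℕ, 2 ^ k / (k.factorial : ℝ) * (‖(A ^ 3) x‖ / 6) :=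
          Summable.tsum_le_tsum hterm htailnorm hmaj
      _ = (∑' k : ℕ, 2 ^ k / (k.factorial : ℝ)) * (‖(A ^ 3) x‖ / 6) := tsum_mul_right
      _ = Real.exp 2 / 6 * ‖(A ^ 3) x‖ := by rw [hexp2]; ring
  calc ‖(C - exp A) x‖ = ‖g 2 + ∑' k : ℕ, g (k + 3)‖ := by rw [key, hsplit2, norm_neg]
    _ ≤ ‖g 2‖ + ‖∑' k : ℕ, g (k + 3)‖ := norm_add_le _ _
    _ ≤ 1 / 2 * ‖(A ^ 2 : X →L[ℝ] X) x‖ + Real.exp 2 / 6 * ‖(A ^ 3 : X →L[ℝ] X) x‖ := by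
        refine add_le_add ?_ htail
        rw [hg2, norm_smul]
        norm_num
end main

/-- Improved Chernoff-type estimate: for a contraction `C` on a Banach space,
`‖(Cⁿ - e^{n(C-1)}) x‖ ≤ (n/2)(‖(C-1)² x‖ + (e²/3)‖(C-1)³ x‖)`. -/
theorem chernoff_square_estimate {X : Type*} [NormedAddCommGroup X] [NormedSpace ℝ X]
    [CompleteSpace X] (C : X →L[ℝ] X) (hC : ‖C‖ ≤ 1) (n : ℕ) (x : X) :
    ‖(C ^ n - exp ((n : ℝ) • (C - 1))) x‖
      ≤ (n : ℝ) / 2 *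
        (‖((C - 1) ^ 2 : X →L[ℝ] X) x‖ + Real.exp 2 / 3 * ‖((C - 1) ^ 3 : X →L[ℝ] X) x‖) := by
  set E : X →L[ℝ] X := exp (C - 1) with hE
  have hEn : exp ((n : ℝ) • (C - 1)) = E ^ n := by
    let +nondep : NormedAlgebra ℚ (X →L[ℝ] X) := .restrictScalars ℚ ℝ (X →L[ℝ] X)
    rw [Nat.cast_smul_eq_nsmul ℝ n (C - 1), exp_nsmul]
  have hE1 : ‖E‖ ≤ 1 := aux_norm_E C hC
  have hcomm : Commute C E :=
    ((Commute.refl C).sub_right (Commute.one_right C)).exp_right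
  have htel : C ^ n - E ^ n = (∑ i ∈ Finset.range n, C ^ i * E ^ (n - 1 - i)) * (C - E) :=
    (hcomm.geom_sum₂_mul n).symm
  have hsumnorm : ‖∑ i ∈ Finset.range n, C ^ i * E ^ (n - 1 - i)‖ ≤ (n : ℝ) := by
    calc ‖∑ i ∈ Finset.range n, C ^ i * E ^ (n - 1 - i)‖
        ≤ ∑ i ∈ Finset.range n, ‖C ^ i * E ^ (n - 1 - i)‖ := norm_sum_le _ _
      _ ≤ ∑ i ∈ Finset.range n, (1 : ℝ) := by
          refine Finset.sum_le_sum fun i _ => ?_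
          calc ‖C ^ i * E ^ (n - 1 - i)‖ ≤ ‖C ^ i‖ * ‖E ^ (n - 1 - i)‖ := norm_mul_le _ _
            _ ≤ ‖C‖ ^ i * ‖E‖ ^ (n - 1 - i) := by
                refine mul_le_mul (aux_norm_pow_le C i) (aux_norm_pow_le E _) (norm_nonneg _) ?_
                positivity
            _ ≤ 1 ^ i * 1 ^ (n - 1 - i) := by gcongr <;> simp [norm_nonneg]
            _ = 1 := by norm_num
      _ = (n : ℝ) := by simp
  have hkey := aux_pointwise C hC x
  calc ‖(C ^ n - exp ((n : ℝ) • (C - 1))) x‖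
      = ‖(∑ i ∈ Finset.range n, C ^ i * E ^ (n - 1 - i)) ((C - E) x)‖ := by
        rw [hEn, htel]; rfl
    _ ≤ ‖∑ i ∈ Finset.range n, C ^ i * E ^ (n - 1 - i)‖ * ‖(C - E) x‖ :=
        ContinuousLinearMap.le_opNorm _ _
    _ ≤ (n : ℝ) * ‖(C - E) x‖ := mul_le_mul_of_nonneg_right hsumnorm (norm_nonneg _)
    _ ≤ (n : ℝ) * (1 / 2 * ‖((C - 1) ^ 2 : X →L[ℝ] X) x‖
          + Real.exp 2 / 6 * ‖((C - 1) ^ 3 : X →L[ℝ] X) x‖) :=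
        mul_le_mul_of_nonneg_left hkey (Nat.cast_nonneg n)
    _ = (n : ℝ) / 2 *
        (‖((C - 1) ^ 2 : X →L[ℝ] X) x‖ + Real.exp 2 / 3 * ‖((C - 1) ^ 3 : X →L[ℝ] X) x‖) := by
        ring
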